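/- With r rooms each having one switch starting in an unknown state, suppose each of the n-1 non-leader prisoners flips a switch Off→On at their first r+1 opportunities (across any rooms), and the leader flips switches On→Off, counting. Then when the leader completes his ((r+1)(n-1))-th flip On→Off, every prisoner has visited at least one room. -/
import Mathlib


/-- State of the `r`-room, one-switch-per-room protocol: the switches, each
non-leader's number of `Off → On` signals (at most `r+1`), and the leader's
count of `On → Off` flips. -/
structure MultiRoomState (n r : ℕ) where
  rooms : Fin r → Bool
  flips : Fin n → ℕ
  count : ℕ

/-- One visit of prisoner `v.1` to room `v.2`: the leader `L` turns a switch
off (counting) whenever he finds one on; a non-leader turns a switch on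
whenever he finds one off, but at most `r+1` times in total. -/
def multiRoomStep {n r : ℕ} (L : Fin n) (v : Fin n × Fin r)
    (s : MultiRoomState n r) : MultiRoomState n r :=
  if v.1 = L then
    if s.rooms v.2 then
      { s with rooms := Function.update s.rooms v.2 false, count := s.count + 1 }
    else s
  else
    if s.rooms v.2 = false ∧ s.flips v.1 < r + 1 then
      { s with rooms := Function.update s.rooms v.2 true,
               flips := Function.update s.flips v.1 (s.flips v.1 + 1) }
    else s

/-- Run the protocol along a schedule of (prisoner, room) visits, from
arbitrary (unknown) initial switch states `init`. -/
def multiRoomRun {n r : ℕ} (L : Fin n) (sch : ℕ → Fin n × Fin r)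
    (init : Fin r → Bool) : ℕ → MultiRoomState n r
  | 0 => ⟨init, fun _ => 0, 0⟩
  | t + 1 => multiRoomStep L (sch t) (multiRoomRun L sch init t)

section Aux
variable {n r : ℕ}

/-- Number of switches currently on. -/
def onCard (s : MultiRoomState n r) : ℕ := ∑ i : Fin r, (if s.rooms i then 1 else 0)

lemma flips_change (L : Fin n) (v : Fin n × Fin r) (s : MultiRoomState n r) (p : Fin n)
    (h : (multiRoomStep L v s).flips p ≠ s.flips p) : v.1 = p := by
  unfold multiRoomStep at h
  split_ifs at h with h1 h2 h3
  · simp at h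
  · simp at h
  · by_contra hne
    exact h (Function.update_of_ne (fun he => hne he.symm) _ _)
  · simp at h

lemma count_change (L : Fin n) (v : Fin n × Fin r) (s : MultiRoomState n r)
    (h : (multiRoomStep L v s).count ≠ s.count) : v.1 = L := by
  unfold multiRoomStep at h
  split_ifs at h <;> simp_all

lemma flips_le (L : Fin n) (sch : ℕ → Fin n × Fin r) (init : Fin r → Bool)
    (t : ℕ) (p : Fin n) : (multiRoomRun L sch init t).flips p ≤ r + 1 := by
  induction t with
  | zero => simp [multiRoomRun]
  | succ t ih =>
    show (multiRoomStep L (sch t) _).flips p ≤ r + 1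
    unfold multiRoomStep
    split_ifs with h1 h2 h3
    · exact ih
    · exact ih
    · dsimp only
      by_cases hp : (sch t).1 = p
      · subst hp
        rw [Function.update_self]
        omega
      · rw [Function.update_of_ne (fun he => hp he.symm)]; exact ih
    · exact ih

lemma flips_L (L : Fin n) (sch : ℕ → Fin n × Fin r) (init : Fin r → Bool)
    (t : ℕ) : (multiRoomRun L sch init t).flips L = 0 := by
  induction t with
  | zero => simp [multiRoomRun]
  | succ t ih =>
    show (multiRoomStep L (sch t) _).flips L = 0
    unfold multiRoomStep
    split_ifs with h1 h2 h3
    · exact ih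
    · exact ih
    · dsimp only
      rw [Function.update_of_ne (fun he => h1 he.symm)]; exact ih
    · exact ih

lemma step_inv (L : Fin n) (v : Fin n × Fin r) (s : MultiRoomState n r) :
    (multiRoomStep L v s).count + onCard (multiRoomStep L v s) + ∑ p : Fin n, s.flips p
      = s.count + onCard s + ∑ p : Fin n, (multiRoomStep L v s).flips p := by
  unfold multiRoomStep
  split_ifs with h1 h2 h3
  · -- leader turns off
    simp only [onCard]
    have hpt : ∀ i : Fin r, (if Function.update s.rooms v.2 false i then 1 else 0)
        = Function.update (fun i => if s.rooms i then (1:ℕ) else 0) v.2 0 i := by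
      intro i
      by_cases hi : i = v.2
      · subst hi; simp
      · rw [Function.update_of_ne hi, Function.update_of_ne hi]
    rw [Finset.sum_congr rfl (fun i _ => hpt i),
        Finset.sum_update_of_mem (Finset.mem_univ v.2),
        ← Finset.add_sum_erase _ (fun i => if s.rooms i then (1:ℕ) else 0)
          (Finset.mem_univ v.2)]
    simp only [h2, if_true, Finset.erase_eq]
    ring
  · rfl
  · -- non-leader turns on
    simp only [onCard]
    have hpt : ∀ i : Fin r, (if Function.update s.rooms v.2 true i then 1 else 0)
        = Function.update (fun i => if s.rooms i then (1:ℕ) else 0) v.2 1 i := by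
      intro i
      by_cases hi : i = v.2
      · subst hi; simp
      · rw [Function.update_of_ne hi, Function.update_of_ne hi]
    rw [Finset.sum_congr rfl (fun i _ => hpt i),
        Finset.sum_update_of_mem (Finset.mem_univ v.2),
        Finset.sum_update_of_mem (Finset.mem_univ v.1),
        ← Finset.add_sum_erase _ (fun i => if s.rooms i then (1:ℕ) else 0)
          (Finset.mem_univ v.2),
        ← Finset.add_sum_erase _ s.flips (Finset.mem_univ v.1)]
    simp only [h3.1, if_false, Bool.false_eq_true, Finset.erase_eq]
    ring
  · rfl

lemma run_inv (L : Fin n) (sch : ℕ → Fin n × Fin r) (init : Fin r → Bool) (t : ℕ) :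
    (multiRoomRun L sch init t).count + onCard (multiRoomRun L sch init t)
      = onCard (multiRoomRun L sch init 0) + ∑ p : Fin n, (multiRoomRun L sch init t).flips p := by
  induction t with
  | zero => simp [multiRoomRun]
  | succ t ih =>
    have hstep := step_inv L (sch t) (multiRoomRun L sch init t)
    have hdef : multiRoomRun L sch init (t + 1)
        = multiRoomStep L (sch t) (multiRoomRun L sch init t) := rfl
    rw [hdef]
    omega

lemma visited_of_flips (L : Fin n) (sch : ℕ → Fin n × Fin r) (init : Fin r → Bool)
    (t : ℕ) (p : Fin n) (h : (multiRoomRun L sch init t).flips p ≠ 0) :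
    ∃ t' < t, (sch t').1 = p := by
  induction t with
  | zero => simp [multiRoomRun] at h
  | succ t ih =>
    by_cases hc : (multiRoomRun L sch init (t+1)).flips p = (multiRoomRun L sch init t).flips p
    · obtain ⟨t', ht', he⟩ := ih (hc ▸ h)
      exact ⟨t', ht'.trans (Nat.lt_succ_self t), he⟩
    · exact ⟨t, Nat.lt_succ_self t, flips_change L (sch t) _ p hc⟩

lemma visited_of_count (L : Fin n) (sch : ℕ → Fin n × Fin r) (init : Fin r → Bool)
    (t : ℕ) (h : (multiRoomRun L sch init t).count ≠ 0) :
    ∃ t' < t, (sch t').1 = L := by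
  induction t with
  | zero => simp [multiRoomRun] at h
  | succ t ih =>
    by_cases hc : (multiRoomRun L sch init (t+1)).count = (multiRoomRun L sch init t).count
    · obtain ⟨t', ht', he⟩ := ih (hc ▸ h)
      exact ⟨t', ht'.trans (Nat.lt_succ_self t), he⟩
    · exact ⟨t, Nat.lt_succ_self t, count_change L (sch t) _ hc⟩

end Aux

/-- with `r` rooms of unknown initial switch states, when the
leader completes his `((r+1)(n-1))`-th flip `On → Off`, every prisoner has
visited at least one room. -/
theorem multi_room_at_least_one_correct (n r : ℕ) (hn : 1 < n) (L : Fin n)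
    (sch : ℕ → Fin n × Fin r)
    (hsch : ∀ (p : Fin n) (rm : Fin r), {t | sch t = (p, rm)}.Infinite)
    (init : Fin r → Bool) (t : ℕ)
    (hcount : (multiRoomRun L sch init t).count = (r + 1) * (n - 1)) :
    ∀ p : Fin n, ∃ t' < t, (sch t').1 = p := by
  intro p
  by_cases hp : p = L
  · have hne : (multiRoomRun L sch init t).count ≠ 0 := by
      rw [hcount]
      have : 0 < (r + 1) * (n - 1) := Nat.mul_pos (Nat.succ_pos r) (by omega)
      omega
    obtain ⟨t', ht', he⟩ := visited_of_count L sch init t hne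
    exact ⟨t', ht', he.trans hp.symm⟩
  · by_contra hf
    push_neg at hf
    have hfl : (multiRoomRun L sch init t).flips p = 0 := by
      by_contra h0
      obtain ⟨t', ht', he⟩ := visited_of_flips L sch init t p h0
      exact hf t' ht' he
    have hinv := run_inv L sch init t
    have hon0 : onCard (multiRoomRun L sch init 0) ≤ r := by
      unfold onCard
      calc ∑ i : Fin r, (if (multiRoomRun L sch init 0).rooms i then 1 else 0)
          ≤ ∑ _i : Fin r, 1 := Finset.sum_le_sum (fun i _ => by split <;> omega)
        _ = r := by simp
    set S := (Finset.univ.erase L).erase p with hS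
    have hsum : ∑ q : Fin n, (multiRoomRun L sch init t).flips q
        = ∑ q ∈ S, (multiRoomRun L sch init t).flips q := by
      rw [hS]
      rw [Finset.sum_erase _ (by simpa using hfl),
          Finset.sum_erase _ (by simpa using flips_L L sch init t)]
    have hcard : S.card = n - 2 := by
      rw [hS, Finset.card_erase_of_mem (Finset.mem_erase.mpr ⟨hp, Finset.mem_univ p⟩),
          Finset.card_erase_of_mem (Finset.mem_univ L), Finset.card_univ,
          Fintype.card_fin]
      omega
    have hb : ∑ q ∈ S, (multiRoomRun L sch init t).flips q ≤ (n - 2) * (r + 1) := by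
      calc ∑ q ∈ S, (multiRoomRun L sch init t).flips q
          ≤ ∑ _q ∈ S, (r + 1) := Finset.sum_le_sum (fun q _ => flips_le L sch init t q)
        _ = S.card * (r + 1) := by rw [Finset.sum_const, smul_eq_mul]
        _ = (n - 2) * (r + 1) := by rw [hcard]
    have hmul : (r + 1) * (n - 1) = (r + 1) * (n - 2) + (r + 1) := by
      have h2 : n - 1 = (n - 2) + 1 := by omega
      rw [h2, Nat.mul_add, Nat.mul_one]
    have hcomm : (r + 1) * (n - 2) = (n - 2) * (r + 1) := Nat.mul_comm _ _
    omega
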